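/- Let X be an infinite set, G a group with Alt(X) ≤ G ≤ Sym(X), and U ≤ G a subgroup of finite index. Then Alt(X) ≤ U. -/

import Mathlib

/-- The group of finitary permutations of `X`: those with finite support. -/
def FSym (X : Type*) : Subgroup (Equiv.Perm X) where
  carrier := {g | {x | g x ≠ x}.Finite}
  one_mem' := by simp
  mul_mem' := by
    intro a b ha hb
    refine (Set.Finite.union ha hb).subset fun x hx => ?_
    simp only [Set.mem_setOf_eq, Set.mem_union, Equiv.Perm.mul_apply] at hx ⊢
    by_cases h : b x = x
    · left; rwa [h] at hx
    · right; exact h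
  inv_mem' := by
    intro a ha
    refine ha.subset fun x hx => ?_
    simp only [Set.mem_setOf_eq] at hx ⊢
    intro h
    exact hx (Equiv.Perm.inv_eq_iff_eq.mpr h.symm)

/-- A permutation is even (finitary) if it is a product of an even number of transpositions. -/
def IsEvenPerm {X : Type*} [DecidableEq X] (g : Equiv.Perm X) : Prop :=
  ∃ l : List (Equiv.Perm X), (∀ τ ∈ l, τ.IsSwap) ∧ Even l.length ∧ g = l.prod

/-- A permutation is odd (finitary) if it is a product of an odd number of transpositions. -/
def IsOddPerm {X : Type*} [DecidableEq X] (g : Equiv.Perm X) : Prop :=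
  ∃ l : List (Equiv.Perm X), (∀ τ ∈ l, τ.IsSwap) ∧ Odd l.length ∧ g = l.prod

/-- `Alt(X)`: the group of even finitary permutations of `X`. -/
def AltGroup (X : Type*) [DecidableEq X] : Subgroup (Equiv.Perm X) where
  carrier := {g | IsEvenPerm g}
  one_mem' := ⟨[], by simp, by simp, by simp⟩
  mul_mem' := by
    rintro a b ⟨l₁, hs₁, he₁, hp₁⟩ ⟨l₂, hs₂, he₂, hp₂⟩
    refine ⟨l₁ ++ l₂, ?_, by simpa using he₁.add he₂, by rw [hp₁, hp₂, List.prod_append]⟩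
    intro τ hτ
    rcases List.mem_append.mp hτ with h | h
    exacts [hs₁ τ h, hs₂ τ h]
  inv_mem' := by
    rintro a ⟨l, hs, he, hp⟩
    refine ⟨(l.map fun x => x⁻¹).reverse, ?_, by simpa using he, ?_⟩
    · intro τ hτ
      simp only [List.mem_reverse, List.mem_map] at hτ
      obtain ⟨σ, hσ, rfl⟩ := hτ
      obtain ⟨x, y, hxy, rfl⟩ := hs σ hσ
      exact ⟨x, y, hxy, by simp⟩
    · rw [hp, List.prod_inv_reverse]

/-! For a finite `S ⊆ X` with `|S| ≥ 5` and `|S|!/2 > [G : U]!`, the simple group `Alt(S)` acts on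
the finite coset space `G ⧸ U`; this action cannot be faithful for cardinality reasons, so it is
trivial and `Alt(S) ≤ U`. Every even finitary permutation is a product of double transpositions,
each of which lies in such an `Alt(S)`. -/

open Equiv Equiv.Perm

theorem Subgroup.list_prod_mem_of_even_length {M : Type*} [Group M] (V : Subgroup M)
    {P : M → Prop} (hV : ∀ x y, P x → P y → x * y ∈ V) :
    ∀ l : List M, (∀ x ∈ l, P x) → Even l.length → l.prod ∈ V
  | [], _, _ => V.one_mem
  | [_], _, he => by simp at he
  | x :: y :: t, hP, he => by
    rw [List.prod_cons, List.prod_cons, ← mul_assoc]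
    refine V.mul_mem (hV x y (hP x (by simp)) (hP y (by simp)))
      (V.list_prod_mem_of_even_length hV t (fun z hz => hP z (by simp [hz])) ?_)
    simpa [Nat.even_add_one] using he

theorem MonoidHom.range_le_of_isSimpleGroup {A G : Type*} [Group A] [Group G] [IsSimpleGroup A]
    (φ : A →* G) (U : Subgroup G) [U.FiniteIndex] (hA : U.index.factorial < Nat.card A) :
    φ.range ≤ U := by
  let ψ := (MulAction.toPermHom G (G ⧸ U)).comp φ
  rcases ψ.normal_ker.eq_bot_or_eq_top with hker | hker
  · have hψ : Function.Injective ψ := (MonoidHom.ker_eq_bot_iff ψ).mp hker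
    have := Nat.card_le_card_of_injective ψ hψ
    rw [Nat.card_perm, ← Subgroup.index] at this
    omega
  · rintro _ ⟨a, rfl⟩
    apply U.normalCore_le
    rw [Subgroup.normalCore_eq_ker]
    exact congr($(MonoidHom.ker_eq_top_iff.mp hker) a)

theorem factorial_lt_nat_card_alternatingGroup {α : Type*} [Fintype α] [DecidableEq α] {m : ℕ}
    (h : m + 3 ≤ Nat.card α) : m.factorial < Nat.card (alternatingGroup α) := by
  have : Nontrivial α := Finite.one_lt_card_iff_nontrivial.mp (by omega)
  have h2 := two_mul_nat_card_alternatingGroup (α := α)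
  rw [Nat.card_perm] at h2
  have h3 : 3 * m.factorial ≤ (m + 3).factorial := by
    rw [Nat.factorial_succ (m + 2)]
    exact Nat.mul_le_mul (by omega) (Nat.factorial_le (by omega))
  have := Nat.factorial_le h
  have := m.factorial_pos
  omega

theorem ofSubtype_mem_altGroup {X : Type*} [DecidableEq X] {p : X → Prop} [DecidablePred p]
    [Fintype (Subtype p)] {σ : Perm (Subtype p)} (hσ : σ ∈ alternatingGroup (Subtype p)) :
    ofSubtype σ ∈ AltGroup X := by
  obtain ⟨l, rfl, hl⟩ := (truncSwapFactors σ).out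
  refine ⟨l.map ofSubtype, ?_, ?_, by rw [map_list_prod]⟩
  · simp only [List.mem_map]
    rintro _ ⟨_, hτ, rfl⟩
    obtain ⟨x, y, hxy, rfl⟩ := hl _ hτ
    exact ⟨x, y, Subtype.val_injective.ne hxy, ofSubtype_swap_eq x y⟩
  · rw [mem_alternatingGroup, sign_prod_list_swap hl] at hσ
    simpa using (neg_one_pow_eq_one_iff_even (by decide)).mp hσ

theorem swap_mul_swap_mem_map_ofSubtype {X : Type*} [DecidableEq X] {a b c d : X}
    (hab : a ≠ b) (hcd : c ≠ d) {S : Finset X} (hS : {a, b, c, d} ⊆ S) :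
    swap a b * swap c d ∈ (alternatingGroup S).map ofSubtype := by
  refine ⟨swap ⟨a, hS (by simp)⟩ ⟨b, hS (by simp)⟩ * swap ⟨c, hS (by simp)⟩ ⟨d, hS (by simp)⟩,
    ?_, by simp⟩
  simp [mem_alternatingGroup, hab, hcd]

theorem altGroup_le_of_map_ofSubtype_le {X : Type*} [Infinite X] [DecidableEq X]
    (V : Subgroup (Perm X)) (n : ℕ)
    (hV : ∀ S : Finset X, n ≤ S.card → (alternatingGroup S).map ofSubtype ≤ V) :
    AltGroup X ≤ V := by
  rintro _ ⟨l, hl, he, rfl⟩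
  refine V.list_prod_mem_of_even_length ?_ l hl he
  rintro _ _ ⟨a, b, hab, rfl⟩ ⟨c, d, hcd, rfl⟩
  obtain ⟨S, hS, hcard⟩ := Infinite.exists_superset_card_eq {a, b, c, d} (max n 4)
    ((Finset.card_le_four).trans (le_max_right _ _))
  exact hV S (hcard ▸ le_max_left _ _) (swap_mul_swap_mem_map_ofSubtype hab hcd hS)

theorem alt_le_of_finiteIndex_general (X : Type*) [Infinite X] [DecidableEq X]
    (G : Subgroup (Equiv.Perm X)) (hG : AltGroup X ≤ G)
    (U : Subgroup (Equiv.Perm X)) (hU : U.relIndex G ≠ 0) :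
    AltGroup X ≤ U := by
  have : (U.subgroupOf G).FiniteIndex := ⟨hU⟩
  refine altGroup_le_of_map_ofSubtype_le U ((U.subgroupOf G).index + 5) fun S hS => ?_
  have hcard : Nat.card S = S.card := Nat.card_eq_finsetCard S
  have : IsSimpleGroup (alternatingGroup S) := alternatingGroup.isSimpleGroup (by omega)
  let φ : alternatingGroup S →* G :=
    (ofSubtype.comp (alternatingGroup S).subtype).codRestrict G
      fun σ => hG (ofSubtype_mem_altGroup σ.2)
  have hφ := φ.range_le_of_isSimpleGroup (U.subgroupOf G)
    (factorial_lt_nat_card_alternatingGroup (by omega))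
  rintro _ ⟨σ, hσ, rfl⟩
  exact Subgroup.mem_subgroupOf.mp (hφ ⟨⟨σ, hσ⟩, rfl⟩)

/-- Let `X` be an infinite set, `G` a group with `Alt(X) ≤ G ≤ Sym(X)`, and `U ≤ G` a
subgroup of finite index. Then `Alt(X) ≤ U`. -/
theorem alt_le_of_finiteIndex (X : Type*) [Infinite X] [DecidableEq X]
    (G : Subgroup (Equiv.Perm X)) (hG : AltGroup X ≤ G)
    (U : Subgroup (Equiv.Perm X)) (hUG : U ≤ G) (hU : U.relIndex G ≠ 0) :
    AltGroup X ≤ U :=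
  alt_le_of_finiteIndex_general X G hG U hU
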